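/- Let (E,J,R) be a dH triple whose pencil λE − (J−R) is regular. If E is Hermitian positive definite, then d_sing^{S_i}(J,R) = ∞. If E is singular, let r := dim ker E ≥ 1 and let N ∈ ℂ^{n×r} be a matrix whose columns form an orthonormal basis of ker E. If R is Hermitian positive definite, then d_sing^{S_i}(J,R) = sqrt(λ_min(N*(R² − J²)N)), where N*(R² − J²)N = N*(R*R + J*J)N is Hermitian positive semidefinite and λ_min denotes its smallest eigenvalue. If R is Hermitian positive semidefinite and singular, then d_sing^{S_i}(J,R) ≥ sqrt(λ_min(N*(R² − J²)N)). -/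

import Mathlib

/-!
A singular perturbed pencil is singular at `λ = 1`. For `x` in the kernel of
`E - (J + ΔJ) + (R + ΔR)`, the form `x*Ex + x*(R + ΔR)x ≥ 0` equals the purely imaginary
`x*(J + ΔJ)x`, so `x` is annihilated by `E`, `J + ΔJ` and `R + ΔR` separately. Hence a unit such
`x = Nc` lies in `ker E` (impossible if `E > 0`), and `ΔJ x = -Jx`, `ΔR x = -Rx` give
`‖ΔJ‖² + ‖ΔR‖² ≥ ‖Jx‖² + ‖Rx‖² = c*N*(R*R + J*J)Nc ≥ λ_min`.

Conversely, for a unit `x ∈ ker E` write `Rx = δx + βu` with `u ⊥ x`, and let `ΔR` be minus the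
Hermitian map acting on `span {x, u}` by `[[δ, β], [β, -δ]]` and vanishing on its orthogonal
complement. It sends `x` to `-Rx` and has norm `√(δ² + β²) = ‖Rx‖`; `R + ΔR` kills `x`, and on
`x^⊥` its form is that of `R + δ |u⟩⟨u|` with `δ = x*Rx ≥ 0`, so it stays positive semidefinite.
The skew-Hermitian `ΔJ` comes from the same construction for the Hermitian matrix `iJ`. Then `x`
is a common kernel vector of the perturbed pencil.
-/

open Matrix
open scoped ComplexOrder ENNReal

noncomputable section

/-- Euclidean norm of a complex vector. -/
def vecNorm {ι : Type*} [Fintype ι] (x : ι → ℂ) : ℝ :=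
  Real.sqrt (∑ i, Complex.normSq (x i))

/-- Spectral norm (largest singular value; the ℓ²→ℓ² operator norm). -/
def specNorm {ι κ : Type*} [Fintype ι] [Fintype κ] [DecidableEq κ] (A : Matrix ι κ ℂ) : ℝ :=
  ‖(Matrix.toEuclideanLin A).toContinuousLinearMap‖

/-- Size of a perturbation pair: `sqrt(‖ΔJ‖² + ‖ΔR‖²)` (spectral norms). -/
def pairNorm {n : ℕ} (dJ dR : Matrix (Fin n) (Fin n) ℂ) : ℝ :=
  Real.sqrt (specNorm dJ ^ 2 + specNorm dR ^ 2)

/-- Membership in the structured perturbation set `S_d(J,R)` (with `E` fixed). -/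
def SdJR {n : ℕ} (R dJ dR : Matrix (Fin n) (Fin n) ℂ) : Prop :=
  dJᴴ = -dJ ∧ (-dR).PosSemidef ∧ (R + dR).PosSemidef

/-- Membership in the structured perturbation set `S_i(J,R)` (with `E` fixed). -/
def SiJR {n : ℕ} (R dJ dR : Matrix (Fin n) (Fin n) ℂ) : Prop :=
  dJᴴ = -dJ ∧ dR.IsHermitian ∧ (R + dR).PosSemidef

/-- The pencil `λE − A` is singular: `det(λE − A) = 0` for all `λ`. -/
def pencilSingular {n : ℕ} (E' A : Matrix (Fin n) (Fin n) ℂ) : Prop :=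
  ∀ lam : ℂ, Matrix.det (lam • E' - A) = 0

/-- Structured distance to singularity with respect to `S_i(J,R)` (perturbing only `J` and
`R`), in `[0,∞]`. -/
def dSingSiJR {n : ℕ} (E J R : Matrix (Fin n) (Fin n) ℂ) : ℝ≥0∞ :=
  sInf {c : ℝ≥0∞ | ∃ dJ dR : Matrix (Fin n) (Fin n) ℂ, SiJR R dJ dR ∧
    pencilSingular E (J + dJ - (R + dR)) ∧ c = ENNReal.ofReal (pairNorm dJ dR)}

/-- Smallest eigenvalue of a Hermitian matrix, via the Rayleigh quotient characterization. -/
def lambdaMin {ι : Type*} [Fintype ι] (M : Matrix ι ι ℂ) : ℝ :=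
  sInf {r : ℝ | ∃ x : ι → ℂ, vecNorm x = 1 ∧ (star x ⬝ᵥ M *ᵥ x).re = r}

section ScaledReflection

open InnerProductSpace ContinuousLinearMap
open scoped ComplexInnerProductSpace

variable {V : Type*} [NormedAddCommGroup V] [InnerProductSpace ℂ V]

/-- For orthonormal `x, u`: the operator acting on `span {x, u}` by the matrix `[[δ, β], [β, -δ]]`
and vanishing on its orthogonal complement. Its square is `δ² + β²` times a projection. -/
def scaledReflection (x u : V) (δ β : ℝ) : V →L[ℂ] V :=
  (δ : ℂ) • (rankOne ℂ x x - rankOne ℂ u u) + (β : ℂ) • (rankOne ℂ x u + rankOne ℂ u x)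

variable {x u : V} {δ β : ℝ}

lemma scaledReflection_apply (y : V) :
    scaledReflection x u δ β y =
      ((δ : ℂ) * ⟪x, y⟫ + β * ⟪u, y⟫) • x + ((β : ℂ) * ⟪x, y⟫ - δ * ⟪u, y⟫) • u := by
  simp only [scaledReflection, _root_.add_apply, _root_.smul_apply,
    _root_.sub_apply, rankOne_apply]
  module

lemma isSymmetric_scaledReflection :
    (scaledReflection x u δ β : V →ₗ[ℂ] V).IsSymmetric := by
  intro y z
  simp only [ContinuousLinearMap.coe_coe, scaledReflection_apply, inner_add_left, inner_add_right,
    inner_smul_left, inner_smul_right, map_add, map_mul, map_sub, Complex.conj_ofReal,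
    inner_conj_symm]
  ring

lemma scaledReflection_apply_self (hx : ‖x‖ = 1) (hxu : ⟪x, u⟫ = 0) :
    scaledReflection x u δ β x = (δ : ℂ) • x + (β : ℂ) • u := by
  rw [scaledReflection_apply, inner_self_eq_one_of_norm_eq_one hx, inner_eq_zero_symm.mp hxu]
  module

lemma norm_inner_sq_add_norm_inner_sq_le (hx : ‖x‖ = 1) (hxu : ⟪x, u⟫ = 0) (hu : ‖u‖ ≤ 1)
    (y : V) : ‖⟪x, y⟫‖ ^ 2 + ‖⟪u, y⟫‖ ^ 2 ≤ ‖y‖ ^ 2 := by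
  set z := y - ⟪x, y⟫ • x
  have hxz : ⟪⟪x, y⟫ • x, z⟫ = 0 := by
    rw [inner_smul_left, inner_sub_right, inner_smul_right, inner_self_eq_one_of_norm_eq_one hx,
      mul_one, sub_self, mul_zero]
  have hyz : ‖y‖ ^ 2 = ‖⟪x, y⟫‖ ^ 2 + ‖z‖ ^ 2 := by
    have := norm_add_sq_eq_norm_sq_add_norm_sq_of_inner_eq_zero _ _ hxz
    rw [show ⟪x, y⟫ • x + z = y by simp [z], norm_smul, hx] at this
    nlinarith
  have huz : ⟪u, y⟫ = ⟪u, z⟫ := by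
    simp [z, inner_eq_zero_symm.mp hxu]
  have hcs : ‖⟪u, z⟫‖ ≤ ‖z‖ :=
    (norm_inner_le_norm u z).trans (mul_le_of_le_one_left (norm_nonneg z) hu)
  rw [huz, hyz]
  gcongr

lemma norm_scaledReflection_le (hx : ‖x‖ = 1) (hxu : ⟪x, u⟫ = 0) (hu : ‖u‖ ≤ 1) :
    ‖scaledReflection x u δ β‖ ≤ √(δ ^ 2 + β ^ 2) := by
  refine opNorm_le_bound _ (Real.sqrt_nonneg _) fun y => ?_
  set a := ⟪x, y⟫
  set b := ⟪u, y⟫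
  have hortho : ⟪((δ : ℂ) * a + β * b) • x, ((β : ℂ) * a - δ * b) • u⟫ = 0 := by
    simp [hxu]
  have hsq : ‖scaledReflection x u δ β y‖ ^ 2 ≤ (δ ^ 2 + β ^ 2) * ‖y‖ ^ 2 := calc
    ‖scaledReflection x u δ β y‖ ^ 2
        = ‖(δ : ℂ) * a + β * b‖ ^ 2 + ‖(β : ℂ) * a - δ * b‖ ^ 2 * ‖u‖ ^ 2 := by
      have := norm_add_sq_eq_norm_sq_add_norm_sq_of_inner_eq_zero _ _ hortho
      rw [scaledReflection_apply, sq, this, norm_smul, norm_smul, hx]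
      ring
    _ ≤ ‖(δ : ℂ) * a + β * b‖ ^ 2 + ‖(β : ℂ) * a - δ * b‖ ^ 2 := by
      gcongr
      exact mul_le_of_le_one_right (sq_nonneg _) (pow_le_one₀ (norm_nonneg u) hu)
    _ = (δ ^ 2 + β ^ 2) * (‖a‖ ^ 2 + ‖b‖ ^ 2) := by
      simp only [← Complex.normSq_eq_norm_sq, Complex.normSq_apply, Complex.add_re,
        Complex.add_im, Complex.sub_re, Complex.sub_im, Complex.mul_re, Complex.mul_im,
        Complex.ofReal_re, Complex.ofReal_im]
      ring
    _ ≤ (δ ^ 2 + β ^ 2) * ‖y‖ ^ 2 := by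
      gcongr
      exact norm_inner_sq_add_norm_inner_sq_le hx hxu hu y
  rw [← Real.sqrt_sq (norm_nonneg _), ← Real.sqrt_sq (norm_nonneg y), ← Real.sqrt_mul]
  · exact Real.sqrt_le_sqrt hsq
  · positivity

lemma ContinuousLinearMap.IsPositive.sub_scaledReflection {T : V →L[ℂ] V} (hT : T.IsPositive)
    (hx : ‖x‖ = 1) (hxu : ⟪x, u⟫ = 0) (hTx : T x = scaledReflection x u δ β x) :
    (T - scaledReflection x u δ β).IsPositive := by
  set S := T - scaledReflection x u δ β
  have hS : (S : V →ₗ[ℂ] V).IsSymmetric := hT.isSymmetric.sub isSymmetric_scaledReflection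
  have hSx : S x = 0 := by simp [S, hTx]
  have hδ : 0 ≤ δ := by
    have := hT.re_inner_nonneg_right x
    rw [hTx, scaledReflection_apply_self hx hxu, inner_add_right, inner_smul_right,
      inner_smul_right, hxu, inner_self_eq_one_of_norm_eq_one hx, mul_one, mul_zero, add_zero]
      at this
    simpa using this
  refine ⟨hS, fun y => ?_⟩
  set z := y - ⟪x, y⟫ • x
  have hxz : ⟪x, z⟫ = 0 := by
    rw [inner_sub_right, inner_smul_right, inner_self_eq_one_of_norm_eq_one hx, mul_one, sub_self]
  -- as `S x = 0` and `S` is symmetric, only the component of `y` orthogonal to `x` matters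
  have hSyz : ⟪S y, y⟫ = ⟪S z, z⟫ := by
    have hy : y = z + ⟪x, y⟫ • x := by simp [z]
    have hzx : ⟪S z, x⟫ = 0 := by
      rw [show ⟪S z, x⟫ = ⟪z, S x⟫ from hS z x, hSx, inner_zero_right]
    rw [hy, map_add, map_smul, hSx, smul_zero, add_zero, inner_add_right, inner_smul_right, hzx,
      mul_zero, add_zero]
  have hBz : ⟪scaledReflection x u δ β z, z⟫ = -((δ : ℂ) * ‖⟪u, z⟫‖ ^ 2) := by
    rw [scaledReflection_apply, inner_add_left, inner_smul_left, inner_smul_left, hxz]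
    simp only [mul_zero, zero_add, zero_sub, map_neg, map_mul, Complex.conj_ofReal]
    rw [neg_mul, mul_assoc, Complex.conj_mul']
  rw [reApplyInnerSelf_apply, hSyz, _root_.sub_apply, inner_sub_left, hBz, sub_neg_eq_add, map_add,
    ← Complex.ofReal_pow, ← Complex.ofReal_mul]
  exact add_nonneg (hT.re_inner_nonneg_left z)
    (by simp only [RCLike.re_to_complex, Complex.ofReal_re]; positivity)

lemma exists_eq_smul_add_smul_of_inner_eq (hx : ‖x‖ = 1) {v : V} (hδ : ⟪x, v⟫ = δ) :
    ∃ (u : V) (β : ℝ), ⟪x, u⟫ = 0 ∧ ‖u‖ ≤ 1 ∧ v = (δ : ℂ) • x + (β : ℂ) • u ∧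
      ‖v‖ ^ 2 = δ ^ 2 + β ^ 2 := by
  set w := v - (δ : ℂ) • x
  have hxw : ⟪x, w⟫ = 0 := by
    rw [inner_sub_right, inner_smul_right, inner_self_eq_one_of_norm_eq_one hx, hδ, mul_one,
      sub_self]
  have hv : v = (δ : ℂ) • x + w := by simp [w]
  have hnorm : ‖v‖ ^ 2 = δ ^ 2 + ‖w‖ ^ 2 := by
    have := norm_add_sq_eq_norm_sq_add_norm_sq_of_inner_eq_zero _ _
      (show ⟪(δ : ℂ) • x, w⟫ = 0 by rw [inner_smul_left, hxw, mul_zero])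
    rw [← hv, norm_smul, hx, Complex.norm_real, Real.norm_eq_abs] at this
    nlinarith [sq_abs δ]
  by_cases hw : w = 0
  · exact ⟨0, 0, by simp, by simp, by simpa [hw] using hv, by simpa [hw] using hnorm⟩
  refine ⟨(‖w‖⁻¹ : ℂ) • w, ‖w‖, ?_, (norm_smul_inv_norm hw).le, ?_, hnorm⟩
  · rw [inner_smul_right, hxw, mul_zero]
  · rw [smul_smul, mul_inv_cancel₀ (by simpa using hw), one_smul, ← hv]

theorem exists_isSymmetric_apply_eq_norm_le {T : V →L[ℂ] V}
    (hT : (T : V →ₗ[ℂ] V).IsSymmetric) (hx : ‖x‖ = 1) :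
    ∃ D : V →L[ℂ] V, (D : V →ₗ[ℂ] V).IsSymmetric ∧ D x = T x ∧ ‖D‖ ≤ ‖T x‖ ∧
      (T.IsPositive → (T - D).IsPositive) := by
  set δ := RCLike.re ⟪T x, x⟫
  have hδ : ⟪x, T x⟫ = δ := by rw [← hT.apply_clm]; exact (hT.coe_re_inner_apply_self x).symm
  obtain ⟨u, β, hxu, hu, hTx, hnorm⟩ := exists_eq_smul_add_smul_of_inner_eq hx hδ
  have hBx : scaledReflection x u δ β x = T x := by rw [scaledReflection_apply_self hx hxu, hTx]
  refine ⟨scaledReflection x u δ β, isSymmetric_scaledReflection, hBx, ?_,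
    fun hTpos => hTpos.sub_scaledReflection hx hxu hBx.symm⟩
  rw [← Real.sqrt_sq (norm_nonneg (T x)), hnorm]
  exact norm_scaledReflection_le hx hxu hu

end ScaledReflection

section VecNorm

variable {ι κ : Type*} [Fintype ι]

lemma vecNorm_eq_norm (x : ι → ℂ) : vecNorm x = ‖WithLp.toLp 2 x‖ := by
  simp [vecNorm, EuclideanSpace.norm_eq, Complex.normSq_eq_norm_sq]

lemma vecNorm_nonneg (x : ι → ℂ) : 0 ≤ vecNorm x := Real.sqrt_nonneg _

lemma vecNorm_smul (c : ℂ) (x : ι → ℂ) : vecNorm (c • x) = ‖c‖ * vecNorm x := by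
  rw [vecNorm_eq_norm, vecNorm_eq_norm, WithLp.toLp_smul, norm_smul]

lemma ne_zero_of_vecNorm_eq_one {x : ι → ℂ} (hx : vecNorm x = 1) : x ≠ 0 := by
  rintro rfl
  simp [vecNorm] at hx

lemma vecNorm_sq (x : ι → ℂ) : vecNorm x ^ 2 = (star x ⬝ᵥ x).re := by
  rw [vecNorm, Real.sq_sqrt (Finset.sum_nonneg fun i _ => Complex.normSq_nonneg _), dotProduct,
    Complex.re_sum]
  simp [Complex.normSq_apply]

lemma vecNorm_mulVec_sq [Fintype κ] (A : Matrix κ ι ℂ) (x : ι → ℂ) :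
    vecNorm (A *ᵥ x) ^ 2 = (star x ⬝ᵥ (Aᴴ * A) *ᵥ x).re := by
  rw [vecNorm_sq, star_mulVec, ← dotProduct_mulVec, mulVec_mulVec]

lemma exists_vecNorm_eq_one_mulVec_eq_zero [DecidableEq ι] {M : Matrix ι ι ℂ} (h : M.det = 0) :
    ∃ x, vecNorm x = 1 ∧ M *ᵥ x = 0 := by
  obtain ⟨x, hx, hMx⟩ := exists_mulVec_eq_zero_iff.mpr h
  refine ⟨(vecNorm x : ℂ)⁻¹ • x, ?_, by rw [mulVec_smul, hMx, smul_zero]⟩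
  rw [vecNorm_eq_norm, WithLp.toLp_smul, vecNorm_eq_norm]
  exact norm_smul_inv_norm (by simpa using hx)

end VecNorm

section SpecNorm

variable {ι κ : Type*} [Fintype ι] [DecidableEq ι]

lemma specNorm_nonneg [Fintype κ] (A : Matrix κ ι ℂ) : 0 ≤ specNorm A := norm_nonneg _

lemma vecNorm_mulVec_le [Fintype κ] (A : Matrix κ ι ℂ) (x : ι → ℂ) :
    vecNorm (A *ᵥ x) ≤ specNorm A * vecNorm x := by
  simpa [vecNorm_eq_norm, specNorm, Matrix.toLpLin_apply] using
    (toEuclideanLin A).toContinuousLinearMap.le_opNorm (WithLp.toLp 2 x)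

lemma specNorm_smul [Fintype κ] (c : ℂ) (A : Matrix κ ι ℂ) :
    specNorm (c • A) = ‖c‖ * specNorm A := by
  rw [specNorm, specNorm, map_smul, map_smul, norm_smul]

lemma specNorm_neg [Fintype κ] (A : Matrix κ ι ℂ) : specNorm (-A) = specNorm A := by
  simpa using specNorm_smul (-1) A

lemma specNorm_toEuclideanCLM_symm (T : EuclideanSpace ℂ ι →L[ℂ] EuclideanSpace ℂ ι) :
    specNorm ((toEuclideanCLM (n := ι) (𝕜 := ℂ)).symm T) = ‖T‖ :=
  congrArg norm (StarAlgEquiv.apply_symm_apply toEuclideanCLM T)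

end SpecNorm

section SkewHermitian

variable {ι : Type*}

lemma isHermitian_I_smul {J : Matrix ι ι ℂ} (hJ : Jᴴ = -J) : (Complex.I • J).IsHermitian := by
  simp [IsHermitian, conjTranspose_smul, hJ]

variable [Fintype ι]

lemma re_star_dotProduct_mulVec_self_eq_zero {J : Matrix ι ι ℂ} (hJ : Jᴴ = -J) (x : ι → ℂ) :
    (star x ⬝ᵥ J *ᵥ x).re = 0 := by
  simpa [smul_mulVec, dotProduct_smul] using
    (isHermitian_I_smul hJ).im_star_dotProduct_mulVec_self x

theorem mulVec_eq_zero_of_sub_sub_mulVec_eq_zero {E J R : Matrix ι ι ℂ} (hE : E.PosSemidef)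
    (hJ : Jᴴ = -J) (hR : R.PosSemidef) {x : ι → ℂ}
    (hx : (E - (J - R)) *ᵥ x = 0) : E *ᵥ x = 0 ∧ J *ᵥ x = 0 ∧ R *ᵥ x = 0 := by
  have hEx := hE.dotProduct_mulVec_nonneg x
  have hRx := hR.dotProduct_mulVec_nonneg x
  have hsum : star x ⬝ᵥ E *ᵥ x + star x ⬝ᵥ R *ᵥ x = star x ⬝ᵥ J *ᵥ x := by
    have := congrArg (star x ⬝ᵥ ·) hx
    simp only [sub_mulVec, dotProduct_sub, dotProduct_zero] at this
    linear_combination this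
  -- `x*Ex + x*Rx ≥ 0` equals the purely imaginary `x*Jx`, so both terms vanish
  have hzero : star x ⬝ᵥ E *ᵥ x + star x ⬝ᵥ R *ᵥ x = 0 := by
    have h := Complex.nonneg_iff.mp (add_nonneg hEx hRx)
    refine Complex.ext ?_ h.2.symm
    rw [hsum, re_star_dotProduct_mulVec_self_eq_zero hJ, Complex.zero_re]
  obtain ⟨hE0, hR0⟩ := (add_eq_zero_iff_of_nonneg hEx hRx).mp hzero
  have hE' := (hE.dotProduct_mulVec_zero_iff x).mp hE0
  have hR' := (hR.dotProduct_mulVec_zero_iff x).mp hR0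
  refine ⟨hE', ?_, hR'⟩
  simpa [sub_mulVec, hE', hR'] using hx

end SkewHermitian

section StructuredMapping

variable {ι : Type*} [Fintype ι] [DecidableEq ι]

theorem Matrix.IsHermitian.exists_isHermitian_mulVec_eq {H : Matrix ι ι ℂ} (hH : H.IsHermitian)
    {x : ι → ℂ} (hx : vecNorm x = 1) :
    ∃ D : Matrix ι ι ℂ, D.IsHermitian ∧ D *ᵥ x = H *ᵥ x ∧ specNorm D ≤ vecNorm (H *ᵥ x) ∧
      (H.PosSemidef → (H - D).PosSemidef) := by
  obtain ⟨D, hD, hDx, hDnorm, hDpos⟩ := exists_isSymmetric_apply_eq_norm_le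
    (T := toEuclideanCLM (n := ι) (𝕜 := ℂ) H) (isSymmetric_toEuclideanLin_iff.mpr hH)
    (x := WithLp.toLp 2 x) (by rwa [← vecNorm_eq_norm])
  set Dm := (toEuclideanCLM (n := ι) (𝕜 := ℂ)).symm D
  have hDm : toEuclideanCLM (n := ι) (𝕜 := ℂ) Dm = D := StarAlgEquiv.apply_symm_apply _ D
  refine ⟨Dm, isSymmetric_toEuclideanLin_iff.mp
    (by rwa [← coe_toEuclideanCLM_eq_toEuclideanLin, hDm]), ?_, ?_, fun hHpos => ?_⟩
  · simpa only [← hDm, ofLp_toEuclideanCLM, WithLp.ofLp_toLp] using congrArg WithLp.ofLp hDx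
  · rw [specNorm_toEuclideanCLM_symm, vecNorm_eq_norm]
    simpa using hDnorm
  · rw [← isPositive_toEuclideanLin_iff, ← coe_toEuclideanCLM_eq_toEuclideanLin, map_sub, hDm]
    exact hDpos (isPositive_toEuclideanLin_iff.mpr hHpos)

theorem exists_skewHermitian_mulVec_eq {J : Matrix ι ι ℂ} (hJ : Jᴴ = -J) {x : ι → ℂ}
    (hx : vecNorm x = 1) :
    ∃ D : Matrix ι ι ℂ, Dᴴ = -D ∧ D *ᵥ x = J *ᵥ x ∧ specNorm D ≤ vecNorm (J *ᵥ x) := by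
  obtain ⟨D, hD, hDx, hDnorm, -⟩ := (isHermitian_I_smul hJ).exists_isHermitian_mulVec_eq hx
  refine ⟨-Complex.I • D, ?_, ?_, ?_⟩
  · simp [conjTranspose_smul, hD.eq]
  · rw [smul_mulVec, hDx, smul_mulVec, smul_smul]
    simp
  · rw [specNorm_smul]
    simpa [smul_mulVec, vecNorm_smul] using hDnorm

end StructuredMapping

section DistanceToSingularity

variable {n : ℕ} {E J R : Matrix (Fin n) (Fin n) ℂ}

theorem exists_mulVec_eq_zero_le_pairNorm_of_pencilSingular (hE : E.PosSemidef) (hJ : Jᴴ = -J)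
    {dJ dR : Matrix (Fin n) (Fin n) ℂ} (hS : SiJR R dJ dR)
    (hsing : pencilSingular E (J + dJ - (R + dR))) :
    ∃ x, vecNorm x = 1 ∧ E *ᵥ x = 0 ∧
      √(vecNorm (R *ᵥ x) ^ 2 + vecNorm (J *ᵥ x) ^ 2) ≤ pairNorm dJ dR := by
  obtain ⟨hdJ, -, hRdR⟩ := hS
  have hJdJ : (J + dJ)ᴴ = -(J + dJ) := by rw [conjTranspose_add, hJ, hdJ, neg_add]
  obtain ⟨x, hx, hker⟩ := exists_vecNorm_eq_one_mulVec_eq_zero (by simpa using hsing 1)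
  obtain ⟨hEx, hJx, hRx⟩ := mulVec_eq_zero_of_sub_sub_mulVec_eq_zero hE hJdJ hRdR hker
  have bound (A dA : Matrix (Fin n) (Fin n) ℂ) (h : (A + dA) *ᵥ x = 0) :
      vecNorm (A *ᵥ x) ^ 2 ≤ specNorm dA ^ 2 := by
    have hA : A *ᵥ x = (-1 : ℂ) • dA *ᵥ x := by
      rw [add_mulVec] at h
      rw [eq_neg_of_add_eq_zero_left h, neg_one_smul]
    have := vecNorm_mulVec_le dA x
    rw [hx, mul_one] at this
    rw [hA, vecNorm_smul, norm_neg, norm_one, one_mul]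
    exact pow_le_pow_left₀ (vecNorm_nonneg _) this 2
  refine ⟨x, hx, hEx, Real.sqrt_le_sqrt ?_⟩
  linarith [bound R dR hRx, bound J dJ hJx]

theorem exists_SiJR_pencilSingular_pairNorm_le (hJ : Jᴴ = -J) (hR : R.PosSemidef)
    {x : Fin n → ℂ} (hx : vecNorm x = 1) (hEx : E *ᵥ x = 0) :
    ∃ dJ dR, SiJR R dJ dR ∧ pencilSingular E (J + dJ - (R + dR)) ∧
      pairNorm dJ dR ≤ √(vecNorm (R *ᵥ x) ^ 2 + vecNorm (J *ᵥ x) ^ 2) := by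
  obtain ⟨DJ, hDJ, hDJx, hDJnorm⟩ := exists_skewHermitian_mulVec_eq hJ hx
  obtain ⟨DR, hDR, hDRx, hDRnorm, hRDR⟩ := hR.isHermitian.exists_isHermitian_mulVec_eq hx
  have hS : SiJR R (-DJ) (-DR) :=
    ⟨by rw [conjTranspose_neg, hDJ], hDR.neg, by simpa [← sub_eq_add_neg] using hRDR hR⟩
  refine ⟨-DJ, -DR, hS, fun lam => ?_, Real.sqrt_le_sqrt ?_⟩
  · refine exists_mulVec_eq_zero_iff.mp ⟨x, ne_zero_of_vecNorm_eq_one hx, ?_⟩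
    simp [sub_mulVec, add_mulVec, neg_mulVec, smul_mulVec, hEx, hDJx, hDRx]
  · rw [specNorm_neg, specNorm_neg]
    linarith [pow_le_pow_left₀ (specNorm_nonneg DJ) hDJnorm 2,
      pow_le_pow_left₀ (specNorm_nonneg DR) hDRnorm 2]

end DistanceToSingularity

section LambdaMin

variable {ι : Type*} [Fintype ι] {M : Matrix ι ι ℂ}

lemma lambdaMin_le (hM : M.PosSemidef) {c : ι → ℂ} (hc : vecNorm c = 1) :
    lambdaMin M ≤ (star c ⬝ᵥ M *ᵥ c).re :=
  csInf_le ⟨0, by rintro _ ⟨y, -, rfl⟩; exact hM.re_dotProduct_nonneg y⟩ ⟨c, hc, rfl⟩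

lemma le_ofReal_sqrt_lambdaMin [Nonempty ι] (hM : M.PosSemidef) {a : ℝ≥0∞}
    (h : ∀ c, vecNorm c = 1 → a ≤ ENNReal.ofReal √(star c ⬝ᵥ M *ᵥ c).re) :
    a ≤ ENNReal.ofReal √(lambdaMin M) := by
  classical
  have hmono : Monotone fun t => ENNReal.ofReal √t :=
    fun s t hst => ENNReal.ofReal_le_ofReal (Real.sqrt_le_sqrt hst)
  have hcont : Continuous fun t => ENNReal.ofReal √t :=
    ENNReal.continuous_ofReal.comp Real.continuous_sqrt
  have hunit : vecNorm (Pi.single (Classical.arbitrary ι) 1 : ι → ℂ) = 1 := by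
    simp [vecNorm_eq_norm]
  have hinf := hmono.map_csInf_of_continuousAt
    (A := {t | ∃ c : ι → ℂ, vecNorm c = 1 ∧ (star c ⬝ᵥ M *ᵥ c).re = t}) hcont.continuousAt
    ⟨_, _, hunit, rfl⟩ ⟨0, by rintro _ ⟨y, -, rfl⟩; exact hM.re_dotProduct_nonneg y⟩
  refine le_of_le_of_eq (le_sInf ?_) hinf.symm
  rintro _ ⟨_, ⟨c, hc, rfl⟩, rfl⟩
  exact h c hc

end LambdaMin

lemma vecNorm_mulVec_of_conjTranspose_mul_self_eq_one {ι κ : Type*} [Fintype ι] [Fintype κ]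
    [DecidableEq κ] {N : Matrix ι κ ℂ} (hN : Nᴴ * N = 1) (c : κ → ℂ) :
    vecNorm (N *ᵥ c) = vecNorm c := by
  rw [← sq_eq_sq₀ (vecNorm_nonneg _) (vecNorm_nonneg _), vecNorm_mulVec_sq, hN, one_mulVec,
    vecNorm_sq]

lemma re_star_dotProduct_mulVec_eq_vecNorm_sq_add {ι κ : Type*} [Fintype ι] [Fintype κ]
    (A B : Matrix ι ι ℂ) (N : Matrix ι κ ℂ) (c : κ → ℂ) :
    (star c ⬝ᵥ (Nᴴ * (Aᴴ * A + Bᴴ * B) * N) *ᵥ c).re =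
      vecNorm (A *ᵥ N *ᵥ c) ^ 2 + vecNorm (B *ᵥ N *ᵥ c) ^ 2 := by
  rw [mulVec_mulVec, mulVec_mulVec, vecNorm_mulVec_sq, vecNorm_mulVec_sq, ← Complex.add_re,
    ← dotProduct_add, ← add_mulVec]
  simp only [conjTranspose_mul, Matrix.mul_add, Matrix.add_mul, Matrix.mul_assoc]

lemma posSemidef_conjTranspose_mul_add_mul_mul {ι κ : Type*} [Fintype ι] [Fintype κ]
    (A B : Matrix ι ι ℂ) (N : Matrix ι κ ℂ) : (Nᴴ * (Aᴴ * A + Bᴴ * B) * N).PosSemidef :=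
  ((posSemidef_conjTranspose_mul_self A).add
    (posSemidef_conjTranspose_mul_self B)).conjTranspose_mul_mul_same N

section KernelBasis

variable {n r : ℕ} {E J R : Matrix (Fin n) (Fin n) ℂ} {N : Matrix (Fin n) (Fin r) ℂ}

theorem dSingSiJR_eq_top_of_posDef (hE : E.PosDef) (hJ : Jᴴ = -J) : dSingSiJR E J R = ⊤ := by
  refine sInf_eq_top.mpr ?_
  rintro _ ⟨dJ, dR, hS, hsing, rfl⟩
  obtain ⟨x, hx, hEx, -⟩ :=
    exists_mulVec_eq_zero_le_pairNorm_of_pencilSingular hE.posSemidef hJ hS hsing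
  simpa [hEx] using hE.dotProduct_mulVec_pos (ne_zero_of_vecNorm_eq_one hx)

theorem ofReal_sqrt_lambdaMin_le_dSingSiJR (hE : E.PosSemidef) (hJ : Jᴴ = -J) (hN : Nᴴ * N = 1)
    (hker : ∀ v, E *ᵥ v = 0 → ∃ c, v = N *ᵥ c) :
    ENNReal.ofReal √(lambdaMin (Nᴴ * (Rᴴ * R + Jᴴ * J) * N)) ≤ dSingSiJR E J R := by
  refine le_sInf ?_
  rintro _ ⟨dJ, dR, hS, hsing, rfl⟩
  obtain ⟨x, hx, hEx, hle⟩ := exists_mulVec_eq_zero_le_pairNorm_of_pencilSingular hE hJ hS hsing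
  obtain ⟨c, rfl⟩ := hker x hEx
  refine ENNReal.ofReal_le_ofReal (le_trans (Real.sqrt_le_sqrt ?_) hle)
  rw [← re_star_dotProduct_mulVec_eq_vecNorm_sq_add]
  exact lambdaMin_le (posSemidef_conjTranspose_mul_add_mul_mul R J N)
    (by rwa [← vecNorm_mulVec_of_conjTranspose_mul_self_eq_one hN])

theorem dSingSiJR_le_ofReal_sqrt_lambdaMin (hr : 1 ≤ r) (hJ : Jᴴ = -J) (hR : R.PosSemidef)
    (hN : Nᴴ * N = 1) (hker : ∀ c, E *ᵥ (N *ᵥ c) = 0) :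
    dSingSiJR E J R ≤ ENNReal.ofReal √(lambdaMin (Nᴴ * (Rᴴ * R + Jᴴ * J) * N)) := by
  have : Nonempty (Fin r) := ⟨⟨0, hr⟩⟩
  refine le_ofReal_sqrt_lambdaMin (posSemidef_conjTranspose_mul_add_mul_mul R J N) fun c hc => ?_
  rw [re_star_dotProduct_mulVec_eq_vecNorm_sq_add]
  obtain ⟨dJ, dR, hS, hsing, hle⟩ := exists_SiJR_pencilSingular_pairNorm_le hJ hR
    (by rwa [vecNorm_mulVec_of_conjTranspose_mul_self_eq_one hN]) (hker c)
  exact sInf_le_of_le ⟨dJ, dR, hS, hsing, rfl⟩ (ENNReal.ofReal_le_ofReal hle)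

end KernelBasis

theorem dH_dist_sing_SiJR_general {n : ℕ} (E J R : Matrix (Fin n) (Fin n) ℂ)
    (hE : E.PosSemidef) (hJ : Jᴴ = -J) (hR : R.PosSemidef) :
    (E.PosDef → dSingSiJR E J R = ⊤) ∧
    (∀ (r : ℕ) (N : Matrix (Fin n) (Fin r) ℂ), 1 ≤ r → Nᴴ * N = 1 →
      (∀ v : Fin n → ℂ, E *ᵥ v = 0 ↔ ∃ c : Fin r → ℂ, v = N *ᵥ c) →
      Nᴴ * (R * R - J * J) * N = Nᴴ * (Rᴴ * R + Jᴴ * J) * N ∧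
      (Nᴴ * (R * R - J * J) * N).PosSemidef ∧
      (R.PosDef →
        dSingSiJR E J R =
          ENNReal.ofReal (Real.sqrt (lambdaMin (Nᴴ * (R * R - J * J) * N)))) ∧
      (R.det = 0 →
        ENNReal.ofReal (Real.sqrt (lambdaMin (Nᴴ * (R * R - J * J) * N))) ≤
          dSingSiJR E J R)) := by
  refine ⟨fun hEpd => dSingSiJR_eq_top_of_posDef hEpd hJ, fun r N hr hN hker => ?_⟩
  have hM : Nᴴ * (R * R - J * J) * N = Nᴴ * (Rᴴ * R + Jᴴ * J) * N := by
    rw [hR.isHermitian.eq, hJ, neg_mul, sub_eq_add_neg]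
  have hlower := ofReal_sqrt_lambdaMin_le_dSingSiJR (R := R) hE hJ hN fun v hv => (hker v).mp hv
  rw [hM]
  refine ⟨rfl, posSemidef_conjTranspose_mul_add_mul_mul R J N, fun _ => le_antisymm ?_ hlower,
    fun _ => hlower⟩
  exact dSingSiJR_le_ofReal_sqrt_lambdaMin hr hJ hR hN fun c => (hker _).mpr ⟨c, rfl⟩

/-- for a regular dH pencil, if `E` is positive definite then
`d_sing^{S_i}(J,R) = ∞`; if `E` is singular with `N` an orthonormal basis matrix of `ker E`
(of dimension `r ≥ 1`), then `N*(R² − J²)N = N*(R*R + J*J)N` is Hermitian positive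
semidefinite, `d_sing^{S_i}(J,R) = sqrt(λ_min(N*(R² − J²)N))` when `R` is positive definite,
and `d_sing^{S_i}(J,R) ≥ sqrt(λ_min(N*(R² − J²)N))` when `R` is singular. -/
theorem dH_dist_sing_SiJR {n : ℕ} (E J R : Matrix (Fin n) (Fin n) ℂ)
    (hE : E.PosSemidef) (hJ : Jᴴ = -J) (hR : R.PosSemidef)
    (hreg : ∃ μ : ℂ, Matrix.det (μ • E - (J - R)) ≠ 0) :
    (E.PosDef → dSingSiJR E J R = ⊤) ∧
    (∀ (r : ℕ) (N : Matrix (Fin n) (Fin r) ℂ), 1 ≤ r → Nᴴ * N = 1 →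
      (∀ v : Fin n → ℂ, E *ᵥ v = 0 ↔ ∃ c : Fin r → ℂ, v = N *ᵥ c) →
      Nᴴ * (R * R - J * J) * N = Nᴴ * (Rᴴ * R + Jᴴ * J) * N ∧
      (Nᴴ * (R * R - J * J) * N).PosSemidef ∧
      (R.PosDef →
        dSingSiJR E J R =
          ENNReal.ofReal (Real.sqrt (lambdaMin (Nᴴ * (R * R - J * J) * N)))) ∧
      (R.det = 0 →
        ENNReal.ofReal (Real.sqrt (lambdaMin (Nᴴ * (R * R - J * J) * N))) ≤
          dSingSiJR E J R)) :=
  dH_dist_sing_SiJR_general E J R hE hJ hR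

end
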